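/- arXiv:2002.06296 — 4 statements merged into one kernel-verified Lean document; each statement's English description precedes it below -/
import Mathlib

section
/- Let A ∈ ℝ^{n×d} be a nonzero matrix with rows a₁,…,aₙ and rank r. Then the total sensitivity equals the rank: ∑_{i=1}^n s_A(aᵢ) = r. -/
/-!
Every hyperplane is `vᗮ` for some `v`, and `μ(aᵢ, vᗮ) = ⟪v, aᵢ⟫² / ‖v‖² = (Av)ᵢ² / ‖v‖²`,
`μ(A, vᗮ) = ‖Av‖² / ‖v‖²`. Hence `s_A(aᵢ)` is the supremum of `yᵢ² / ‖y‖²` over the nonzero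
vectors `y` of the column space `U` of `A`. Since `yᵢ = ⟪P eᵢ, y⟫` for the orthogonal projection
`P` onto `U`, Cauchy–Schwarz bounds this by `‖P eᵢ‖²`, with equality at `y = P eᵢ`. The sum of
these leverage scores is `∑ ⟪eᵢ, P eᵢ⟫ = tr P = dim U = rank A`.
-/

open Matrix

/-- Squared Euclidean distance from a point to a linear subspace. -/
noncomputable def muRow {d : ℕ} (x : EuclideanSpace ℝ (Fin d))
    (S : Submodule ℝ (EuclideanSpace ℝ (Fin d))) : ℝ :=
  Metric.infDist x (S : Set (EuclideanSpace ℝ (Fin d))) ^ 2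

/-- Sum of squared distances of the rows of a matrix to a linear subspace. -/
noncomputable def muMat {n d : ℕ} (A : Matrix (Fin n) (Fin d) ℝ)
    (S : Submodule ℝ (EuclideanSpace ℝ (Fin d))) : ℝ :=
  ∑ i, muRow (WithLp.toLp 2 (A i)) S

/-- Sensitivity of row `i` of `A`. -/
noncomputable def sens {n d : ℕ} (A : Matrix (Fin n) (Fin d) ℝ) (i : Fin n) : ℝ :=
  sSup {t : ℝ | ∃ S : Submodule ℝ (EuclideanSpace ℝ (Fin d)),
    Module.finrank ℝ S = d - 1 ∧ 0 < muMat A S ∧ t = muRow (WithLp.toLp 2 (A i)) S / muMat A S}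

open Module Submodule
open scoped RealInnerProductSpace

theorem Submodule.exists_eq_orthogonal_span_singleton {𝕜 F : Type*} [RCLike 𝕜]
    [NormedAddCommGroup F] [InnerProductSpace 𝕜 F] [FiniteDimensional 𝕜 F]
    {S : Submodule 𝕜 F} (hS : finrank 𝕜 F ≤ finrank 𝕜 S + 1) :
    ∃ v : F, S = (𝕜 ∙ v)ᗮ := by
  have hSperp : finrank 𝕜 Sᗮ ≤ 1 := by
    have := S.finrank_add_finrank_orthogonal
    omega
  obtain ⟨v, hv⟩ := ((finrank_le_one_iff_isPrincipal Sᗮ).mp hSperp).principal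
  exact ⟨v, by rw [← hv, orthogonal_orthogonal]⟩

section Projection

variable {E : Type*} [NormedAddCommGroup E] [InnerProductSpace ℝ E]

theorem Submodule.inner_starProjection_of_mem_right (U : Submodule ℝ E)
    [U.HasOrthogonalProjection] (x : E) {y : E} (hy : y ∈ U) :
    ⟪U.starProjection x, y⟫ = ⟪x, y⟫ := by
  rw [inner_starProjection_left_eq_right, starProjection_eq_self_iff.mpr hy]

theorem Submodule.real_inner_starProjection_self (U : Submodule ℝ E) [U.HasOrthogonalProjection]
    (x : E) : ⟪x, U.starProjection x⟫ = ‖U.starProjection x‖ ^ 2 := by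
  rw [← real_inner_self_eq_norm_sq,
    U.inner_starProjection_of_mem_right x (U.starProjection_apply_mem x)]

theorem Submodule.inner_sq_le_norm_starProjection_sq_mul (U : Submodule ℝ E)
    [U.HasOrthogonalProjection] (x : E) {y : E} (hy : y ∈ U) :
    ⟪x, y⟫ ^ 2 ≤ ‖U.starProjection x‖ ^ 2 * ‖y‖ ^ 2 := by
  rw [← U.inner_starProjection_of_mem_right x hy, ← mul_pow, ← sq_abs]
  exact pow_le_pow_left₀ (abs_nonneg _) (abs_real_inner_le_norm _ _) 2

theorem Submodule.sSup_inner_sq_div_norm_sq (U : Submodule ℝ E) [U.HasOrthogonalProjection]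
    (e : E) :
    sSup {t | ∃ y ∈ U, y ≠ 0 ∧ t = ⟪e, y⟫ ^ 2 / ‖y‖ ^ 2} = ‖U.starProjection e‖ ^ 2 := by
  rcases eq_or_ne U ⊥ with rfl | hU
  · simp -- the set is empty, and `sSup ∅ = 0`
  refine IsGreatest.csSup_eq ⟨?_, ?_⟩
  · by_cases hp : U.starProjection e = 0
    · obtain ⟨y, hyU, hy⟩ := U.ne_bot_iff.mp hU
      refine ⟨y, hyU, hy, ?_⟩
      rw [hp, ← U.inner_starProjection_of_mem_right e hyU, hp]
      simp
    · refine ⟨_, U.starProjection_apply_mem e, hp, ?_⟩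
      rw [U.real_inner_starProjection_self]
      field_simp
  · rintro _ ⟨y, hyU, hy, rfl⟩
    rw [div_le_iff₀ (by positivity)]
    exact U.inner_sq_le_norm_starProjection_sq_mul e hyU

theorem Submodule.trace_starProjection [FiniteDimensional ℝ E] (U : Submodule ℝ E) :
    LinearMap.trace ℝ E U.starProjection = finrank ℝ U := by
  have hrange : LinearMap.range (U.starProjection : E →ₗ[ℝ] E) = U := U.range_starProjection
  have hproj := LinearMap.IsIdempotentElem.isProj_range _
    (ContinuousLinearMap.IsIdempotentElem.toLinearMap U.isIdempotentElem_starProjection)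
  rw [hproj.trace, hrange]

theorem Submodule.sum_norm_starProjection_sq {ι : Type*} [Fintype ι] [FiniteDimensional ℝ E]
    (b : OrthonormalBasis ι ℝ E) (U : Submodule ℝ E) :
    ∑ i, ‖U.starProjection (b i)‖ ^ 2 = finrank ℝ U := by
  rw [← U.trace_starProjection, LinearMap.trace_eq_sum_inner _ b]
  exact Finset.sum_congr rfl fun i _ => (U.real_inner_starProjection_self (b i)).symm

end Projection

section Sensitivity

variable {n d : ℕ}

theorem muRow_eq_norm_sub_starProjection_sq (x : EuclideanSpace ℝ (Fin d))
    (S : Submodule ℝ (EuclideanSpace ℝ (Fin d))) :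
    muRow x S = ‖x - S.starProjection x‖ ^ 2 := by
  simp_rw [muRow, Metric.infDist_eq_iInf, dist_eq_norm, starProjection_minimal]
  rfl

theorem muRow_orthogonal_span_singleton (x v : EuclideanSpace ℝ (Fin d)) :
    muRow x (ℝ ∙ v)ᗮ = ⟪v, x⟫ ^ 2 / ‖v‖ ^ 2 := by
  rw [muRow_eq_norm_sub_starProjection_sq, starProjection_orthogonal_val, sub_sub_cancel,
    ← real_inner_starProjection_self, starProjection_singleton, real_inner_smul_right,
    real_inner_comm]
  simp only [RCLike.ofReal_real_eq_id, id]
  ring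

theorem Matrix.toEuclideanLin_apply_eq_inner (A : Matrix (Fin n) (Fin d) ℝ)
    (v : EuclideanSpace ℝ (Fin d)) (i : Fin n) :
    toEuclideanLin A v i = ⟪v, WithLp.toLp 2 (A i)⟫ := by
  simp [EuclideanSpace.inner_eq_star_dotProduct, Matrix.mulVec, dotProduct_comm]

theorem muMat_orthogonal_span_singleton (A : Matrix (Fin n) (Fin d) ℝ)
    (v : EuclideanSpace ℝ (Fin d)) :
    muMat A (ℝ ∙ v)ᗮ = ‖toEuclideanLin A v‖ ^ 2 / ‖v‖ ^ 2 := by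
  simp only [muMat, muRow_orthogonal_span_singleton, ← A.toEuclideanLin_apply_eq_inner,
    ← Finset.sum_div, EuclideanSpace.norm_sq_eq, Real.norm_eq_abs, sq_abs]

theorem muRow_div_muMat_orthogonal_span_singleton (A : Matrix (Fin n) (Fin d) ℝ) (i : Fin n)
    (v : EuclideanSpace ℝ (Fin d)) :
    muRow (WithLp.toLp 2 (A i)) (ℝ ∙ v)ᗮ / muMat A (ℝ ∙ v)ᗮ =
      ⟪EuclideanSpace.single i 1, toEuclideanLin A v⟫ ^ 2 / ‖toEuclideanLin A v‖ ^ 2 := by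
  rcases eq_or_ne v 0 with rfl | hv
  · rw [muRow_orthogonal_span_singleton]
    simp
  rw [muRow_orthogonal_span_singleton, muMat_orthogonal_span_singleton,
    EuclideanSpace.inner_single_left, A.toEuclideanLin_apply_eq_inner]
  field_simp
  simp

theorem Matrix.finrank_range_toEuclideanLin (A : Matrix (Fin n) (Fin d) ℝ) :
    finrank ℝ (LinearMap.range (toEuclideanLin A)) = A.rank := by
  rw [toEuclideanLin_eq_toLin_orthonormal, ← rank_eq_finrank_range_toLin]

theorem sens_eq_sSup_range (A : Matrix (Fin n) (Fin d) ℝ) (i : Fin n) :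
    sens A i = sSup {t | ∃ y ∈ LinearMap.range (toEuclideanLin A), y ≠ 0 ∧
      t = ⟪EuclideanSpace.single i 1, y⟫ ^ 2 / ‖y‖ ^ 2} := by
  rw [sens]
  congr 1
  ext t
  constructor
  · rintro ⟨S, hS, hpos, rfl⟩
    obtain ⟨v, rfl⟩ : ∃ v, S = (ℝ ∙ v)ᗮ :=
      exists_eq_orthogonal_span_singleton (by rw [hS, finrank_euclideanSpace_fin]; omega)
    have hAv : toEuclideanLin A v ≠ 0 := fun h => by
      simp [muMat_orthogonal_span_singleton, h] at hpos
    exact ⟨_, LinearMap.mem_range_self _ v, hAv, muRow_div_muMat_orthogonal_span_singleton A i v⟩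
  · rintro ⟨_, ⟨v, rfl⟩, hAv, rfl⟩
    have hv : v ≠ 0 := fun h => hAv (by simp [h])
    refine ⟨(ℝ ∙ v)ᗮ, ?_, ?_, (muRow_div_muMat_orthogonal_span_singleton A i v).symm⟩
    · have := (ℝ ∙ v).finrank_add_finrank_orthogonal
      rw [finrank_span_singleton hv, finrank_euclideanSpace_fin] at this
      omega
    · rw [muMat_orthogonal_span_singleton]
      positivity

end Sensitivity

theorem total_sensitivity_eq_rank_general {n d r : ℕ}
    (A : Matrix (Fin n) (Fin d) ℝ) (hrank : A.rank = r) :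
    ∑ i, sens A i = (r : ℝ) := by
  simp_rw [sens_eq_sSup_range, Submodule.sSup_inner_sq_div_norm_sq]
  rw [← hrank, ← A.finrank_range_toEuclideanLin]
  simpa using (LinearMap.range (toEuclideanLin A)).sum_norm_starProjection_sq
    (EuclideanSpace.basisFun (Fin n) ℝ)

/-- The total sensitivity of a nonzero matrix equals its rank. -/
theorem total_sensitivity_eq_rank {n d r : ℕ}
    (A : Matrix (Fin n) (Fin d) ℝ) (hA : A ≠ 0) (hrank : A.rank = r) :
    ∑ i, sens A i = (r : ℝ) :=
  total_sensitivity_eq_rank_general A hrank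
end

section
/- Under the singleton-sampling setup, assume P(N = 1) > 0. Then for every i ∈ {1,…,n}, the conditional probability that the unique occurring event is Eᵢ, given that exactly one event occurs, equals sᵢ/r: P(Eᵢ occurs and no E_j with j ≠ i occurs | N = 1) = sᵢ/r. -/
open MeasureTheory ProbabilityTheory
open scoped Classical

/-- Singleton sampling: conditioned on exactly one event occurring, the
probability that the unique occurring event is `E i` equals `sᵢ/r`. -/
theorem singleton_cond_prob {Ω : Type*} [MeasurableSpace Ω]
    (P : Measure Ω) [IsProbabilityMeasure P]
    {n : ℕ} (hn : 1 ≤ n) (s : Fin n → ℝ) (hs : ∀ ℓ, 0 ≤ s ℓ)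
    (r : ℝ) (hr : 0 < r) (hsum : ∑ ℓ, s ℓ = r)
    (γ : Fin n → ℝ) (hγ : ∀ ℓ, γ ℓ = s ℓ / (s ℓ + r))
    (E : Fin n → Set Ω) (hmeas : ∀ ℓ, MeasurableSet (E ℓ))
    (hind : iIndepSet E P)
    (hprob : ∀ ℓ, P (E ℓ) = ENNReal.ofReal (γ ℓ))
    (N : Ω → ℕ) (hN : ∀ ω, N ω = (Finset.univ.filter fun ℓ => ω ∈ E ℓ).card)
    (hpos : P {ω | N ω = 1} ≠ 0) (i : Fin n) :
    P[E i ∩ ⋂ (j) (_ : j ≠ i), (E j)ᶜ | {ω | N ω = 1}] =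
      ENNReal.ofReal (s i / r) := by
  -- basic positivity
  have hsr : ∀ ℓ, 0 < s ℓ + r := fun ℓ => by have := hs ℓ; linarith
  have hγ0 : ∀ ℓ, 0 ≤ γ ℓ := fun ℓ => by
    rw [hγ]; exact div_nonneg (hs ℓ) (hsr ℓ).le
  have hγ1 : ∀ ℓ, γ ℓ ≤ 1 := fun ℓ => by
    rw [hγ]; exact (div_le_one (hsr ℓ)).2 (by linarith [hr])
  have h1γ : ∀ ℓ, 1 - γ ℓ = r / (s ℓ + r) := fun ℓ => by
    rw [hγ, eq_div_iff (hsr ℓ).ne', sub_mul, div_mul_cancel₀ _ (hsr ℓ).ne']; ring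
  set A : Fin n → Set Ω := fun k => E k ∩ ⋂ (j) (_ : j ≠ k), (E j)ᶜ with hA
  set a : Fin n → ℝ := fun k => γ k * ∏ j ∈ Finset.univ.erase k, (1 - γ j) with ha
  have ha0 : ∀ k, 0 ≤ a k := fun k =>
    mul_nonneg (hγ0 k) (Finset.prod_nonneg fun j _ => by linarith [hγ1 j])
  have hAmeas : ∀ k, MeasurableSet (A k) := fun k =>
    (hmeas k).inter (MeasurableSet.iInter fun j => MeasurableSet.iInter fun _ => (hmeas j).compl)
  -- measure of A k
  have hPA : ∀ k, P (A k) = ENNReal.ofReal (a k) := by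
    intro k
    have hF : A k = ⋂ j, (if j = k then E k else (E j)ᶜ) := by
      ext ω
      simp only [hA, Set.mem_inter_iff, Set.mem_iInter, Set.mem_compl_iff]
      constructor
      · rintro ⟨h1, h2⟩ j
        split_ifs with hj
        · exact h1
        · exact h2 j hj
      · intro h
        refine ⟨by simpa using h k, fun j hj => by simpa [hj] using h j⟩
    rw [hF]
    have hInd := (iIndepSet_iff_iIndep E P).1 hind
    rw [hInd.meas_iInter (fun j => ?_)]
    · have : ∀ j, P (if j = k then E k else (E j)ᶜ)
          = ENNReal.ofReal (if j = k then γ k else 1 - γ j) := by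
        intro j
        split_ifs with hj
        · exact hprob k
        · rw [prob_compl_eq_one_sub (hmeas j), hprob j,
            ENNReal.ofReal_sub 1 (hγ0 j), ENNReal.ofReal_one]
      simp only [this]
      rw [← Finset.mul_prod_erase Finset.univ _ (Finset.mem_univ k), if_pos rfl]
      rw [← ENNReal.ofReal_prod_of_nonneg (fun j _ => by
        split_ifs with hj
        · exact hγ0 k
        · linarith [hγ1 j]), ← ENNReal.ofReal_mul (hγ0 k)]
      congr 1
      rw [ha]
      congr 1
      exact Finset.prod_congr rfl fun j hj => by
        rw [if_neg (Finset.mem_erase.1 hj).1]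
    · split_ifs with hj
      · exact MeasurableSpace.measurableSet_generateFrom (by subst hj; exact Set.mem_singleton _)
      · exact (MeasurableSpace.measurableSet_generateFrom (Set.mem_singleton _)).compl
  -- decomposition of {N = 1}
  have hU : {ω | N ω = 1} = ⋃ k, A k := by
    ext ω
    simp only [Set.mem_setOf_eq, hN, Finset.card_eq_one, Set.mem_iUnion, hA,
      Set.mem_inter_iff, Set.mem_iInter, Set.mem_compl_iff]
    constructor
    · rintro ⟨k, hk⟩
      refine ⟨k, ?_, fun j hj hmem => ?_⟩
      · have : k ∈ Finset.univ.filter fun ℓ => ω ∈ E ℓ := hk ▸ Finset.mem_singleton_self k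
        simpa using this
      · have : j ∈ Finset.univ.filter fun ℓ => ω ∈ E ℓ := by simpa using hmem
        rw [hk, Finset.mem_singleton] at this
        exact hj this
    · rintro ⟨k, hk, hk'⟩
      refine ⟨k, ?_⟩
      ext j
      simp only [Finset.mem_filter, Finset.mem_univ, true_and, Finset.mem_singleton]
      constructor
      · intro hj
        by_contra hne
        exact hk' j hne hj
      · rintro rfl; exact hk
  have hdisj : Pairwise (Function.onFun Disjoint A) := by
    intro k l hkl
    refine Set.disjoint_left.2 fun ω hωk hωl => ?_
    have h1 : ω ∈ E k := hωk.1
    have h2 : ω ∉ E k := by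
      have := hωl.2
      simp only [Set.mem_iInter, Set.mem_compl_iff] at this
      exact this k hkl
    exact h2 h1
  have hPN : P {ω | N ω = 1} = ENNReal.ofReal (∑ k, a k) := by
    rw [hU, measure_iUnion hdisj hAmeas, tsum_fintype]
    rw [ENNReal.ofReal_sum_of_nonneg (fun k _ => ha0 k)]
    exact Finset.sum_congr rfl fun k _ => hPA k
  -- real arithmetic
  set D : ℝ := ∏ ℓ, (s ℓ + r) with hD
  have hD0 : 0 < D := Finset.prod_pos fun ℓ _ => hsr ℓ
  have hak : ∀ k, a k = s k * r ^ (n - 1) / D := by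
    intro k
    show γ k * ∏ j ∈ Finset.univ.erase k, (1 - γ j) = s k * r ^ (n - 1) / D
    have hpr : ∏ j ∈ Finset.univ.erase k, (1 - γ j) = ∏ j ∈ Finset.univ.erase k, r / (s j + r) :=
      Finset.prod_congr rfl fun j _ => h1γ j
    rw [hpr, hγ k, Finset.prod_div_distrib, Finset.prod_const,
      Finset.card_erase_of_mem (Finset.mem_univ k), Finset.card_univ, Fintype.card_fin,
      div_mul_div_comm, hD, ← Finset.mul_prod_erase Finset.univ _ (Finset.mem_univ k)]
  have hT : ∑ k, a k = r ^ n / D := by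
    simp only [hak]
    rw [← Finset.sum_div, ← Finset.sum_mul, hsum]
    congr 1
    rw [← pow_succ']
    congr 1
    omega
  have hT0 : 0 < ∑ k, a k := by
    rw [hT]; positivity
  -- conclude
  have hBmeas : MeasurableSet {ω | N ω = 1} := hU ▸ MeasurableSet.iUnion hAmeas
  rw [cond_apply hBmeas]
  have hsub : {ω | N ω = 1} ∩ A i = A i := by
    rw [hU]
    exact Set.inter_eq_self_of_subset_right (Set.subset_iUnion A i)
  rw [hsub, hPA i, hPN]
  have hrn : r ^ n = r * r ^ (n - 1) := by
    rw [← pow_succ']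
    congr 1
    omega
  have hre : a i / (∑ k, a k) = s i / r := by
    rw [hak i, hT, hrn]
    field_simp
  calc (ENNReal.ofReal (∑ k, a k))⁻¹ * ENNReal.ofReal (a i)
      = ENNReal.ofReal (a i) / ENNReal.ofReal (∑ k, a k) := by
        rw [div_eq_mul_inv, mul_comm]
    _ = ENNReal.ofReal (a i / ∑ k, a k) := (ENNReal.ofReal_div_of_pos hT0).symm
    _ = ENNReal.ofReal (s i / r) := by rw [hre]
end

section
/- Under the singleton-sampling setup, the probability that exactly one event occurs equals the probability that no event occurs: P(N = 1) = P(N = 0). -/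
open MeasureTheory ProbabilityTheory
open scoped Classical

/-- Singleton sampling: the probability that exactly one event occurs equals
the probability that no event occurs. -/
theorem prob_one_eq_prob_zero {Ω : Type*} [MeasurableSpace Ω]
    (P : Measure Ω) [IsProbabilityMeasure P]
    {n : ℕ} (hn : 1 ≤ n) (s : Fin n → ℝ) (hs : ∀ ℓ, 0 ≤ s ℓ)
    (r : ℝ) (hr : 0 < r) (hsum : ∑ ℓ, s ℓ = r)
    (γ : Fin n → ℝ) (hγ : ∀ ℓ, γ ℓ = s ℓ / (s ℓ + r))
    (E : Fin n → Set Ω) (hmeas : ∀ ℓ, MeasurableSet (E ℓ))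
    (hind : iIndepSet E P)
    (hprob : ∀ ℓ, P (E ℓ) = ENNReal.ofReal (γ ℓ))
    (N : Ω → ℕ) (hN : ∀ ω, N ω = (Finset.univ.filter fun ℓ => ω ∈ E ℓ).card) :
    P {ω | N ω = 1} = P {ω | N ω = 0} := by
  have hspos : ∀ ℓ, 0 < s ℓ + r := fun ℓ => by linarith [hs ℓ]
  have hγ0 : ∀ ℓ, 0 ≤ γ ℓ := fun ℓ => by
    rw [hγ]; exact div_nonneg (hs ℓ) (hspos ℓ).le
  have hγ1 : ∀ ℓ, γ ℓ < 1 := fun ℓ => by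
    rw [hγ]; rw [div_lt_one (hspos ℓ)]; linarith
  have hb0 : ∀ ℓ, 0 ≤ 1 - γ ℓ := fun ℓ => by linarith [hγ1 ℓ]
  -- independence of generated sigma algebras
  have hInd := (ProbabilityTheory.iIndepSet_iff_iIndep E P).1 hind
  have hmg : ∀ i, MeasurableSet[MeasurableSpace.generateFrom {E i}] (E i) :=
    fun i => MeasurableSpace.measurableSet_generateFrom rfl
  -- complement probability
  have hcompl : ∀ i, P ((E i)ᶜ) = ENNReal.ofReal (1 - γ i) := by
    intro i
    rw [prob_compl_eq_one_sub (hmeas i), hprob i,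
      ENNReal.ofReal_sub 1 (hγ0 i), ENNReal.ofReal_one]
  -- the event "exactly ℓ occurs"
  set A : Fin n → Set Ω := fun ℓ => ⋂ i, (if i = ℓ then E i else (E i)ᶜ) with hA
  have hAmem : ∀ ℓ ω, ω ∈ A ℓ ↔ ∀ i, (ω ∈ E i ↔ i = ℓ) := by
    intro ℓ ω
    simp only [hA, Set.mem_iInter]
    constructor
    · intro h i
      have hh := h i
      by_cases hi : i = ℓ
      · subst hi; simp at hh; simp [hh]
      · simp [hi] at hh; simp [hi, hh]
    · intro h i
      by_cases hi : i = ℓ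
      · subst hi; simp [(h i).2 rfl]
      · simp only [if_neg hi]; exact fun hw => hi ((h i).1 hw)
  -- set identities
  have hset1 : {ω | N ω = 1} = ⋃ ℓ, A ℓ := by
    ext ω
    simp only [Set.mem_setOf_eq, hN, Finset.card_eq_one, Set.mem_iUnion]
    constructor
    · rintro ⟨a, ha⟩
      refine ⟨a, (hAmem a ω).2 fun i => ?_⟩
      constructor
      · intro hi
        have : i ∈ ({a} : Finset (Fin n)) := ha ▸ (by simp [hi])
        simpa using this
      · rintro rfl
        have : i ∈ Finset.univ.filter fun ℓ => ω ∈ E ℓ := ha ▸ (by simp)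
        simpa using this
    · rintro ⟨ℓ, hℓ⟩
      refine ⟨ℓ, Finset.ext fun i => ?_⟩
      simp [(hAmem ℓ ω).1 hℓ i]
  have hset0 : {ω | N ω = 0} = ⋂ i, (E i)ᶜ := by
    ext ω
    simp [hN, Finset.card_eq_zero, Finset.filter_eq_empty_iff]
  -- measure of intersections via independence
  have hmeasA : ∀ ℓ, P (A ℓ) = ∏ i, P (if i = ℓ then E i else (E i)ᶜ) := by
    intro ℓ
    refine hInd.meas_iInter fun i => ?_
    by_cases hi : i = ℓ
    · simpa [hi] using hmg i
    · simpa [hi] using (hmg i).compl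
  have hmeas0 : P (⋂ i, (E i)ᶜ) = ∏ i, P ((E i)ᶜ) :=
    hInd.meas_iInter fun i => (hmg i).compl
  -- A measurable & pairwise disjoint
  have hAms : ∀ ℓ, MeasurableSet (A ℓ) := by
    intro ℓ
    refine MeasurableSet.iInter fun i => ?_
    by_cases hi : i = ℓ
    · simp only [hi, if_pos rfl]; exact hmeas ℓ
    · simp only [if_neg hi]; exact (hmeas i).compl
  have hdisj : Pairwise (Function.onFun Disjoint A) := by
    intro a b hab
    refine Set.disjoint_left.2 fun ω hwa hwb => ?_
    have h1 := ((hAmem a ω).1 hwa a).2 rfl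
    exact hab (((hAmem b ω).1 hwb a).1 h1)
  -- compute measure of union
  have hPA : ∀ ℓ, P (A ℓ) = ENNReal.ofReal (γ ℓ * ∏ i ∈ Finset.univ.erase ℓ, (1 - γ i)) := by
    intro ℓ
    rw [hmeasA ℓ, ← Finset.mul_prod_erase Finset.univ _ (Finset.mem_univ ℓ), if_pos rfl,
      hprob ℓ]
    have : ∏ i ∈ Finset.univ.erase ℓ, P (if i = ℓ then E i else (E i)ᶜ)
        = ∏ i ∈ Finset.univ.erase ℓ, ENNReal.ofReal (1 - γ i) := by
      refine Finset.prod_congr rfl fun i hi => ?_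
      rw [if_neg (Finset.mem_erase.1 hi).1, hcompl i]
    rw [this, ← ENNReal.ofReal_prod_of_nonneg fun i _ => hb0 i,
      ← ENNReal.ofReal_mul (hγ0 ℓ)]
  rw [hset1, hset0, measure_iUnion hdisj hAms, hmeas0, tsum_fintype]
  have h0 : ∏ i, P ((E i)ᶜ) = ENNReal.ofReal (∏ i, (1 - γ i)) := by
    rw [show (∏ i, P ((E i)ᶜ)) = ∏ i, ENNReal.ofReal (1 - γ i) from
        Finset.prod_congr rfl fun i _ => hcompl i,
      ENNReal.ofReal_prod_of_nonneg fun i _ => hb0 i]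
  rw [h0]
  have h1 : ∀ ℓ, P (A ℓ) = ENNReal.ofReal (γ ℓ * ∏ i ∈ Finset.univ.erase ℓ, (1 - γ i)) := hPA
  simp_rw [h1]
  rw [← ENNReal.ofReal_sum_of_nonneg fun ℓ _ =>
    mul_nonneg (hγ0 ℓ) (Finset.prod_nonneg fun i _ => hb0 i)]
  congr 1
  -- the real identity
  have key : ∀ ℓ : Fin n, γ ℓ * ∏ i ∈ Finset.univ.erase ℓ, (1 - γ i)
      = (s ℓ / r) * ∏ i, (1 - γ i) := by
    intro ℓ
    have hbℓ : 1 - γ ℓ = r / (s ℓ + r) := by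
      rw [hγ, eq_div_iff (hspos ℓ).ne', sub_mul, div_mul_cancel₀ _ (hspos ℓ).ne']
      ring
    rw [← Finset.mul_prod_erase Finset.univ _ (Finset.mem_univ ℓ), ← mul_assoc]
    congr 1
    rw [hbℓ, hγ, div_mul_div_comm, mul_comm r (s ℓ + r), mul_div_mul_right _ _ hr.ne']
  rw [Finset.sum_congr rfl fun ℓ _ => key ℓ, ← Finset.sum_mul, ← Finset.sum_div, hsum,
    div_self hr.ne', one_mul]
end

section
/- Under the singleton-sampling setup, the probability that exactly one event occurs is at least one quarter: P(N = 1) ≥ 1/4. -/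
/-!
Splitting `{N = 1}` according to which event occurs, independence gives
`P(N = 1) = ∑ ℓ, γ ℓ * ∏ j ≠ ℓ, (1 - γ j)`. As `1 - γ j = r / (s j + r)`, each summand equals
`(s ℓ / r) * ∏ j, r / (s j + r)`, so `∑ ℓ, s ℓ = r` collapses the sum to
`∏ j, (1 + s j / r)⁻¹ ≥ exp (-∑ j, s j / r) = exp (-1) > 1 / 4`.
-/

open Finset Function MeasureTheory ProbabilityTheory
open scoped Classical

namespace ProbabilityTheory

variable {Ω ι : Type*} {E : ι → Set Ω}

def onlyEvent (E : ι → Set Ω) (ℓ : ι) : Set Ω :=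
  ⋂ j, if j = ℓ then E j else (E j)ᶜ

lemma mem_onlyEvent {ω : Ω} {ℓ : ι} : ω ∈ onlyEvent E ℓ ↔ ∀ j, ω ∈ E j ↔ j = ℓ := by
  refine Set.mem_iInter.trans (forall_congr' fun j => ?_)
  by_cases h : j = ℓ <;> simp [h]

lemma setOf_card_filter_mem_eq_one [Fintype ι] :
    {ω | #{i | ω ∈ E i} = 1} = ⋃ ℓ, onlyEvent E ℓ := by
  ext ω
  simp only [Set.mem_ofPred_eq, Set.mem_iUnion, mem_onlyEvent, card_eq_one, Finset.ext_iff,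
    mem_filter, mem_univ, true_and, mem_singleton]

lemma pairwise_disjoint_onlyEvent : Pairwise (Disjoint on onlyEvent E) := by
  intro ℓ ℓ' hne
  refine Set.disjoint_left.2 fun ω hω hω' => hne ?_
  exact (mem_onlyEvent.1 hω' ℓ).1 ((mem_onlyEvent.1 hω ℓ).2 rfl)

lemma measurableSet_onlyEvent [MeasurableSpace Ω] [Finite ι] (hE : ∀ i, MeasurableSet (E i))
    (ℓ : ι) :
    MeasurableSet (onlyEvent E ℓ) :=
  .iInter fun j => by split_ifs; exacts [hE j, (hE j).compl]

variable [MeasurableSpace Ω] [Fintype ι] {P : Measure Ω}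

lemma iIndepSet.measureReal_onlyEvent (hind : iIndepSet E P) (hE : ∀ i, MeasurableSet (E i))
    (ℓ : ι) : P.real (onlyEvent E ℓ) = P.real (E ℓ) * ∏ j ∈ univ.erase ℓ, (1 - P.real (E j)) := by
  have := hind.isProbabilityMeasure
  have hprod : P (onlyEvent E ℓ) = ∏ j, P (if j = ℓ then E j else (E j)ᶜ) := by
    simpa [onlyEvent] using (iIndepSet_iff E P).1 hind univ fun j _ => by
      have hgen := MeasurableSpace.measurableSet_generateFrom (Set.mem_singleton (E j))
      split_ifs; exacts [hgen, hgen.compl]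
  rw [measureReal_def, hprod, ENNReal.toReal_prod, ← mul_prod_erase _ _ (mem_univ ℓ)]
  congr 1
  · simp [measureReal_def]
  · refine prod_congr rfl fun j hj => ?_
    rw [if_neg (ne_of_mem_erase hj), ← measureReal_def, probReal_compl_eq_one_sub (hE j)]

theorem iIndepSet.measureReal_card_filter_mem_eq_one (hind : iIndepSet E P)
    (hE : ∀ i, MeasurableSet (E i)) :
    P.real {ω | #{i | ω ∈ E i} = 1} =
      ∑ ℓ, P.real (E ℓ) * ∏ j ∈ univ.erase ℓ, (1 - P.real (E j)) := by
  have := hind.isProbabilityMeasure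
  rw [setOf_card_filter_mem_eq_one,
    measureReal_iUnion_fintype pairwise_disjoint_onlyEvent (measurableSet_onlyEvent hE)]
  exact sum_congr rfl fun ℓ _ => hind.measureReal_onlyEvent hE ℓ

end ProbabilityTheory

section

variable {ι : Type*} [Fintype ι] {s : ι → ℝ} {r : ℝ}

lemma sum_div_add_mul_prod_erase_one_sub_div_add (hr : r ≠ 0) (hsr : ∀ j, s j + r ≠ 0) :
    ∑ ℓ, s ℓ / (s ℓ + r) * ∏ j ∈ univ.erase ℓ, (1 - s j / (s j + r)) =
      (∑ ℓ, s ℓ) / r * ∏ j, r / (s j + r) := by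
  have hterm : ∀ ℓ, s ℓ / (s ℓ + r) * ∏ j ∈ univ.erase ℓ, (1 - s j / (s j + r)) =
      s ℓ / r * ∏ j, r / (s j + r) := by
    intro ℓ
    have hcompl : ∀ j, 1 - s j / (s j + r) = r / (s j + r) := fun j => by
      field_simp [hsr j]; ring
    rw [prod_congr rfl fun j _ => hcompl j, ← mul_prod_erase _ _ (mem_univ ℓ)]
    field_simp [hsr ℓ]
  rw [sum_congr rfl fun ℓ _ => hterm ℓ, ← sum_mul, sum_div]

lemma exp_neg_sum_div_le_prod_div_add (hs : ∀ j, 0 ≤ s j) (hr : 0 < r) :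
    Real.exp (-((∑ j, s j) / r)) ≤ ∏ j, r / (s j + r) := by
  have hinv : ∏ j, r / (s j + r) = (∏ j, (1 + s j / r))⁻¹ := by
    rw [← prod_inv_distrib]
    refine prod_congr rfl fun j _ => ?_
    field_simp
    ring
  rw [hinv, Real.exp_neg, sum_div]
  exact inv_anti₀ (prod_pos fun j _ => add_pos_of_pos_of_nonneg one_pos (div_nonneg (hs j) hr.le))
    (Real.prod_one_add_le_exp_sum _ fun j => div_nonneg (hs j) hr.le)

lemma one_div_four_le_sum_div_add_mul_prod_erase_one_sub_div_add (hs : ∀ j, 0 ≤ s j) (hr : 0 < r)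
    (hsum : ∑ j, s j = r) :
    1 / 4 ≤ ∑ ℓ, s ℓ / (s ℓ + r) * ∏ j ∈ univ.erase ℓ, (1 - s j / (s j + r)) := by
  have hsr : ∀ j, s j + r ≠ 0 := fun j => (add_pos_of_nonneg_of_pos (hs j) hr).ne'
  have hone : (∑ j, s j) / r = 1 := by rw [hsum, div_self hr.ne']
  rw [sum_div_add_mul_prod_erase_one_sub_div_add hr.ne' hsr, hone, one_mul]
  calc (1 : ℝ) / 4 ≤ Real.exp (-1) := by linarith [Real.exp_neg_one_gt_d9]
    _ = Real.exp (-((∑ j, s j) / r)) := by rw [hone]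
    _ ≤ ∏ j, r / (s j + r) := exp_neg_sum_div_le_prod_div_add hs hr

end

theorem prob_one_ge_quarter_general {Ω : Type*} [MeasurableSpace Ω]
    (P : Measure Ω)
    {n : ℕ} (s : Fin n → ℝ) (hs : ∀ ℓ, 0 ≤ s ℓ)
    (r : ℝ) (hr : 0 < r) (hsum : ∑ ℓ, s ℓ = r)
    (γ : Fin n → ℝ) (hγ : ∀ ℓ, γ ℓ = s ℓ / (s ℓ + r))
    (E : Fin n → Set Ω) (hmeas : ∀ ℓ, MeasurableSet (E ℓ))
    (hind : iIndepSet E P)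
    (hprob : ∀ ℓ, P (E ℓ) = ENNReal.ofReal (γ ℓ))
    (N : Ω → ℕ) (hN : ∀ ω, N ω = (Finset.univ.filter fun ℓ => ω ∈ E ℓ).card) :
    P {ω | N ω = 1} ≥ 1 / 4 := by
  have := hind.isProbabilityMeasure
  have hPE : ∀ ℓ, P.real (E ℓ) = s ℓ / (s ℓ + r) := fun ℓ => by
    rw [measureReal_def, hprob, hγ, ENNReal.toReal_ofReal (div_nonneg (hs ℓ) (by linarith [hs ℓ]))]
  have hreal : 1 / 4 ≤ P.real {ω | N ω = 1} := by
    simp only [hN, hind.measureReal_card_filter_mem_eq_one hmeas, hPE]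
    exact one_div_four_le_sum_div_add_mul_prod_erase_one_sub_div_add hs hr hsum
  rw [ge_iff_le, ← ofReal_measureReal,
    ENNReal.le_ofReal_iff_toReal_le (by norm_num) measureReal_nonneg]
  simpa using hreal

/-- Singleton sampling: the probability that exactly one event occurs is at
least `1/4`. -/
theorem prob_one_ge_quarter {Ω : Type*} [MeasurableSpace Ω]
    (P : Measure Ω) [IsProbabilityMeasure P]
    {n : ℕ} (hn : 1 ≤ n) (s : Fin n → ℝ) (hs : ∀ ℓ, 0 ≤ s ℓ)
    (r : ℝ) (hr : 0 < r) (hsum : ∑ ℓ, s ℓ = r)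
    (γ : Fin n → ℝ) (hγ : ∀ ℓ, γ ℓ = s ℓ / (s ℓ + r))
    (E : Fin n → Set Ω) (hmeas : ∀ ℓ, MeasurableSet (E ℓ))
    (hind : iIndepSet E P)
    (hprob : ∀ ℓ, P (E ℓ) = ENNReal.ofReal (γ ℓ))
    (N : Ω → ℕ) (hN : ∀ ω, N ω = (Finset.univ.filter fun ℓ => ω ∈ E ℓ).card) :
    P {ω | N ω = 1} ≥ 1 / 4 :=
  prob_one_ge_quarter_general P s hs r hr hsum γ hγ E hmeas hind hprob N hN
end
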